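/- For every rational point (x, y) on E with x ≠ 0, there exist d ∈ {1, m+16n², m+25n², (m+16n²)(m+25n²)} and a rational number r such that x = d·r². -/

import Mathlib

lemma zmod8_key : ∀ k l a b : ZMod 8,
    (2*k+1) * b^2 ≠ 2*(2*k+1)^2*a^4 - 15*(2*k+1)*a^2*(2*l+1)^2 + 18*(2*l+1)^4 := by decide

lemma dvd_prime_mul' {A B h : ℕ} (hA : A.Prime) (hB : B.Prime) (hne : A ≠ B) (h1 : h ∣ A * B) :
    h = 1 ∨ h = A ∨ h = B ∨ h = A * B := by
  have hcop : Nat.Coprime A B := (Nat.coprime_primes hA hB).mpr hne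
  by_cases hAh : A ∣ h <;> by_cases hBh : B ∣ h
  · right; right; right
    exact Nat.dvd_antisymm h1 (Nat.Coprime.mul_dvd_of_dvd_of_dvd hcop hAh hBh)
  · right; left
    obtain ⟨h', rfl⟩ := hAh
    have : h' ∣ B := (mul_dvd_mul_iff_left hA.pos.ne').mp h1
    rcases (Nat.Prime.eq_one_or_self_of_dvd hB h' this) with rfl | rfl
    · simp
    · exact absurd (dvd_mul_left _ _) hBh
  · right; right; left
    obtain ⟨h', rfl⟩ := hBh
    have : h' ∣ A := by
      have : B * h' ∣ B * A := by rwa [mul_comm A B] at h1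
      exact (mul_dvd_mul_iff_left hB.pos.ne').mp this
    rcases (Nat.Prime.eq_one_or_self_of_dvd hA h' this) with rfl | rfl
    · simp
    · exact absurd (dvd_mul_left _ _) hAh
  · left
    have cA : Nat.Coprime h A := ((Nat.Prime.coprime_iff_not_dvd hA).mpr hAh).symm
    have cB : Nat.Coprime h B := ((Nat.Prime.coprime_iff_not_dvd hB).mpr hBh).symm
    exact Nat.Coprime.eq_one_of_dvd (Nat.Coprime.mul_right cA cB) h1

lemma descent (A B : ℕ) (hA : A.Prime) (hB : B.Prime) (hABne : A ≠ B)
    (hA8 : A % 8 = 3) (hB8 : B % 8 = 3)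
    (p w r : ℤ) (hp : 0 < p) (hw : 0 < w) (hcop : IsCoprime p w)
    (hr : r ^ 2 = p * (p ^ 2 - 5 * A * p * w ^ 2 + 4 * A * B * w ^ 4))
    (hN0 : p ^ 2 - 5 * A * p * w ^ 2 + 4 * A * B * w ^ 4 ≠ 0) :
    ∃ d : ℕ, (d = 1 ∨ d = A ∨ d = B ∨ d = A * B) ∧ ∃ a : ℤ, p = d * a ^ 2 := by
  set N : ℤ := p ^ 2 - 5 * A * p * w ^ 2 + 4 * A * B * w ^ 4 with hNdef
  have hNpos : 0 < N := by
    rcases lt_trichotomy N 0 with h | h | h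
    · nlinarith [sq_nonneg r]
    · exact absurd h hN0
    · exact h
  set g : ℕ := Int.gcd p N with hgdef
  have hgpos : 0 < g := Int.gcd_pos_of_ne_zero_left N hp.ne'
  have hgz : (0:ℤ) < (g:ℤ) := by exact_mod_cast hgpos
  have hgp : (g:ℤ) ∣ p := Int.gcd_dvd_left p N
  have hgN : (g:ℤ) ∣ N := Int.gcd_dvd_right p N
  obtain ⟨p₁, hp₁⟩ := hgp
  obtain ⟨N₁, hN₁⟩ := hgN
  have hp₁' : p₁ = p / (g:ℤ) := by rw [hp₁, Int.mul_ediv_cancel_left _ hgz.ne']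
  have hN₁' : N₁ = N / (g:ℤ) := by rw [hN₁, Int.mul_ediv_cancel_left _ hgz.ne']
  have hcp₁ : IsCoprime p₁ N₁ := by
    rw [Int.isCoprime_iff_gcd_eq_one, hp₁', hN₁']
    exact Int.gcd_div_gcd_div_gcd hgpos
  have hp₁pos : 0 < p₁ := by nlinarith
  have hN₁pos : 0 < N₁ := by nlinarith
  have hg2r : (g:ℤ) ^ 2 ∣ r ^ 2 := by
    rw [hr, hp₁, hN₁]; exact ⟨p₁ * N₁, by ring⟩
  have hgr : (g:ℤ) ∣ r := (Int.pow_dvd_pow_iff two_ne_zero).mp hg2r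
  obtain ⟨c, hc⟩ := hgr
  have hc2 : p₁ * N₁ = c ^ 2 := by
    have h2 : (g:ℤ)^2 * (p₁ * N₁) = (g:ℤ)^2 * c^2 := by
      have h3 := hr
      rw [hp₁, hN₁, hc] at h3
      linear_combination -h3
    exact mul_left_cancel₀ (pow_ne_zero 2 hgz.ne') h2
  obtain ⟨a, ha⟩ := Int.sq_of_isCoprime hcp₁ hc2
  have ha' : p₁ = a ^ 2 := by
    rcases ha with h | h
    · exact h
    · nlinarith [sq_nonneg a]
  obtain ⟨b, hb⟩ := Int.sq_of_isCoprime hcp₁.symm (by rw [mul_comm]; exact hc2)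
  have hb' : N₁ = b ^ 2 := by
    rcases hb with h | h
    · exact h
    · nlinarith [sq_nonneg b]
  have hpa : p = (g:ℤ) * a ^ 2 := by rw [hp₁, ha']
  have hNb : N = (g:ℤ) * b ^ 2 := by rw [hN₁, hb']
  have hgw : IsCoprime ((g:ℤ)) w := IsCoprime.of_isCoprime_of_dvd_left hcop ⟨p₁, hp₁⟩
  have hgdvd4AB : (g:ℤ) ∣ 4 * A * B := by
    have h1 : (g:ℤ) ∣ 4 * A * B * w ^ 4 := by
      have h2 : (4:ℤ) * A * B * w ^ 4 = N - p * p + 5 * A * w ^ 2 * p := by rw [hNdef]; ring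
      rw [h2]
      exact dvd_add (dvd_sub ⟨N₁, hN₁⟩ (Dvd.dvd.mul_right ⟨p₁, hp₁⟩ p))
        (Dvd.dvd.mul_left ⟨p₁, hp₁⟩ _)
    exact (hgw.pow_right (n := 4)).dvd_of_dvd_mul_right h1
  have hgdvdn : g ∣ 4 * A * B := by
    have h1 : (g:ℤ) ∣ ((4 * A * B : ℕ) : ℤ) := by push_cast; exact hgdvd4AB
    exact_mod_cast h1
  set d : ℕ := Nat.gcd g (A * B) with hddef
  have hdg : d ∣ g := Nat.gcd_dvd_left _ _
  have hdAB : d ∣ A * B := Nat.gcd_dvd_right _ _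
  obtain ⟨t, hgt⟩ := hdg
  have hdpos : 0 < d := Nat.gcd_pos_of_pos_left _ hgpos
  have htpos : 0 < t := by
    rcases Nat.eq_zero_or_pos t with rfl | h
    · rw [Nat.mul_zero] at hgt; omega
    · exact h
  have hAodd : A % 2 = 1 := by omega
  have hBodd : B % 2 = 1 := by omega
  have htA : ¬ A ∣ t := by
    intro hAt
    have hAg : A ∣ g := hgt ▸ Dvd.dvd.mul_left hAt d
    have hAd : A ∣ d := Nat.dvd_gcd hAg (Dvd.intro B rfl)
    have hA2g : A * A ∣ g := hgt ▸ mul_dvd_mul hAd hAt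
    have hA2 : A * A ∣ 4 * A * B := hA2g.trans hgdvdn
    have h4B : A ∣ 4 * B := by
      have h4 : 4 * A * B = A * (4 * B) := by ring
      rw [h4] at hA2
      exact (mul_dvd_mul_iff_left hA.pos.ne').mp hA2
    rcases (Nat.Prime.dvd_mul hA).mp h4B with h | h
    · have hle := Nat.le_of_dvd (by norm_num) h
      have hA3 : A = 3 := by omega
      rw [hA3] at h; omega
    · exact hABne ((Nat.prime_dvd_prime_iff_eq hA hB).mp h)
  have htB : ¬ B ∣ t := by
    intro hBt
    have hBg : B ∣ g := hgt ▸ Dvd.dvd.mul_left hBt d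
    have hBd : B ∣ d := Nat.dvd_gcd hBg (Dvd.intro_left A rfl)
    have hB2g : B * B ∣ g := hgt ▸ mul_dvd_mul hBd hBt
    have hB2 : B * B ∣ 4 * A * B := hB2g.trans hgdvdn
    have h4A : B ∣ 4 * A := by
      have h4 : 4 * A * B = B * (4 * A) := by ring
      rw [h4] at hB2
      exact (mul_dvd_mul_iff_left hB.pos.ne').mp hB2
    rcases (Nat.Prime.dvd_mul hB).mp h4A with h | h
    · have hle := Nat.le_of_dvd (by norm_num) h
      have hB3 : B = 3 := by omega
      rw [hB3] at h; omega
    · exact hABne ((Nat.prime_dvd_prime_iff_eq hB hA).mp h).symm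
  have hcoptAB : Nat.Coprime t (A * B) :=
    Nat.Coprime.mul_right ((hA.coprime_iff_not_dvd.mpr htA).symm)
      ((hB.coprime_iff_not_dvd.mpr htB).symm)
  have ht4 : t ∣ 4 := by
    have htg : t ∣ g := ⟨d, by rw [hgt]; ring⟩
    have ht4AB : t ∣ 4 * (A * B) := by
      have := htg.trans hgdvdn
      rwa [mul_assoc] at this
    exact Nat.Coprime.dvd_of_dvd_mul_right hcoptAB ht4AB
  have htmem : t = 1 ∨ t = 2 ∨ t = 4 := by
    have hle := Nat.le_of_dvd (by norm_num) ht4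
    interval_cases t <;> omega
  have hdodd : d % 2 = 1 := by
    have hABo : (A * B) % 2 = 1 := Nat.odd_iff.mp ((Nat.odd_mul).mpr
      ⟨Nat.odd_iff.mpr hAodd, Nat.odd_iff.mpr hBodd⟩)
    have : ¬ 2 ∣ d := fun h2d => by
      have := h2d.trans hdAB
      omega
    omega
  have ht2 : t ≠ 2 := by
    intro h2
    have hgeq : (g:ℤ) = 2 * (d:ℤ) := by
      have : g = d * 2 := by rw [hgt, h2]
      rw [this]; push_cast; ring
    have Key : (d:ℤ) * b^2 = 2*(d:ℤ)^2*a^4 - 5*(A:ℤ)*(d:ℤ)*a^2*w^2 + 2*(A:ℤ)*(B:ℤ)*w^4 := by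
      have h3 : (g:ℤ) * b ^ 2 = ((g:ℤ)*a^2)^2 - 5*A*((g:ℤ)*a^2)*w^2 + 4*A*B*w^4 := by
        rw [← hpa, ← hNb, hNdef]
      rw [hgeq] at h3
      apply mul_left_cancel₀ (two_ne_zero (α := ℤ))
      linear_combination h3
    have hwodd : ¬ (2:ℤ) ∣ w := by
      intro h2w
      have h2p : (2:ℤ) ∣ p := by rw [hpa, hgeq]; exact ⟨d * a ^ 2, by ring⟩
      have hu := IsCoprime.isUnit_of_dvd' hcop h2p h2w
      rw [Int.isUnit_iff] at hu
      omega
    obtain ⟨l, hl⟩ : ∃ l, w = 2 * l + 1 := by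
      rcases Int.even_or_odd w with he | ho
      · exact absurd he.two_dvd hwodd
      · obtain ⟨l, hl⟩ := ho; exact ⟨l, hl⟩
    obtain ⟨k, hk⟩ : ∃ k, (d:ℤ) = 2 * k + 1 := by
      have : Odd (d:ℤ) := by
        rw [Int.odd_coe_nat]
        exact Nat.odd_iff.mpr hdodd
      obtain ⟨k, hk⟩ := this; exact ⟨k, hk⟩
    rw [hk, hl] at Key
    have h8 := congrArg (fun z : ℤ => (z : ZMod 8)) Key
    push_cast at h8
    have hA3 : ((A : ℕ) : ZMod 8) = 3 := by
      rw [← ZMod.natCast_mod A 8, hA8]; rfl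
    have hB3 : ((B : ℕ) : ZMod 8) = 3 := by
      rw [← ZMod.natCast_mod B 8, hB8]; rfl
    rw [hA3, hB3] at h8
    exact zmod8_key (k : ZMod 8) (l : ZMod 8) (a : ZMod 8) (b : ZMod 8) (by linear_combination h8)
  rcases htmem with h1 | h1 | h1
  · refine ⟨d, dvd_prime_mul' hA hB hABne hdAB, a, ?_⟩
    rw [hpa]
    congr 1
    rw [hgt, h1]; push_cast; ring
  · exact absurd h1 ht2
  · refine ⟨d, dvd_prime_mul' hA hB hABne hdAB, 2 * a, ?_⟩
    rw [hpa]
    have : (g:ℤ) = (d:ℤ) * 4 := by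
      rw [hgt, h1]; push_cast; ring
    rw [this]; ring


/-- The elliptic curve `y² = x³ − 5(m+16n²)x² + 4(m+16n²)(m+25n²)x` over `ℚ`. -/
def zywinaCurve (m n : ℕ) : WeierstrassCurve ℚ where
  a₁ := 0
  a₂ := -(5 * ((m : ℚ) + 16 * n ^ 2))
  a₃ := 0
  a₄ := 4 * ((m : ℚ) + 16 * n ^ 2) * ((m : ℚ) + 25 * n ^ 2)
  a₆ := 0

set_option maxHeartbeats 1000000 in
/-- For every rational point `(x, y)` on `E` with `x ≠ 0`, the `x`-coordinate is `d·r²` for some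
`d ∈ {1, m+16n², m+25n², (m+16n²)(m+25n²)}` and some rational `r`. -/
theorem x_coord_square_class (m n : ℕ) (hm : 0 < m) (hn : 0 < n)
    (hm1 : Nat.Prime m) (hm2 : Nat.Prime (m + 16 * n ^ 2)) (hm3 : Nat.Prime (m + 25 * n ^ 2))
    (hc1 : m % 24 = 11) (hc2 : (m + 16 * n ^ 2) % 24 = 11) (hc3 : (m + 25 * n ^ 2) % 24 = 11)
    (x y : ℚ) (hxy : (zywinaCurve m n).toAffine.Nonsingular x y) (hx : x ≠ 0) :
    ∃ d ∈ ({1, (m : ℚ) + 16 * n ^ 2, (m : ℚ) + 25 * n ^ 2,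
        ((m : ℚ) + 16 * n ^ 2) * ((m : ℚ) + 25 * n ^ 2)} : Set ℚ),
      ∃ r : ℚ, x = d * r ^ 2 := by
  obtain ⟨heq, -⟩ := hxy
  rw [WeierstrassCurve.Affine.equation_iff] at heq
  simp only [zywinaCurve] at heq
  set A : ℕ := m + 16 * n ^ 2 with hAdef
  set B : ℕ := m + 25 * n ^ 2 with hBdef
  have hAq : ((A : ℕ) : ℚ) = (m : ℚ) + 16 * n ^ 2 := by rw [hAdef]; push_cast; ring
  have hBq : ((B : ℕ) : ℚ) = (m : ℚ) + 25 * n ^ 2 := by rw [hBdef]; push_cast; ring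
  have hE : y ^ 2 = x ^ 3 - 5 * (A : ℚ) * x ^ 2 + 4 * (A : ℚ) * (B : ℚ) * x := by
    rw [hAq, hBq]; linear_combination heq
  have hApos : 0 < A := by rw [hAdef]; positivity
  have hBpos : 0 < B := by rw [hBdef]; positivity
  have hA0 : (0 : ℚ) < (A : ℚ) := by exact_mod_cast hApos
  have hB0 : (0 : ℚ) < (B : ℚ) := by exact_mod_cast hBpos
  have hx0 : 0 < x := by
    rcases lt_trichotomy x 0 with h | h | h
    · nlinarith [sq_nonneg y, mul_pos hA0 hB0, mul_pos (mul_pos hA0 hB0) (neg_pos.mpr h),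
        mul_pos hA0 (mul_pos (neg_pos.mpr h) (neg_pos.mpr h))]
    · exact absurd h hx
    · exact h
  set p : ℤ := x.num with hpdef
  set q : ℤ := (x.den : ℤ) with hqdef
  have hq0 : (0 : ℤ) < q := by rw [hqdef]; exact_mod_cast x.pos
  have hp0 : 0 < p := Rat.num_pos.mpr hx0
  have hxpq : x = (p : ℚ) / (q : ℚ) := by rw [hpdef, hqdef]; exact_mod_cast (Rat.num_div_den x).symm
  set ys : ℤ := y.num with hysdef
  set yt : ℤ := (y.den : ℤ) with hytdef
  have hyt0 : (0 : ℤ) < yt := by rw [hytdef]; exact_mod_cast y.pos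
  have hypq : y = (ys : ℚ) / (yt : ℚ) := by
    rw [hysdef, hytdef]; exact_mod_cast (Rat.num_div_den y).symm
  have hqQ : (q : ℚ) ≠ 0 := by exact_mod_cast hq0.ne'
  have hytQ : (yt : ℚ) ≠ 0 := by exact_mod_cast hyt0.ne'
  have hQ : (ys : ℚ) ^ 2 * (q : ℚ) ^ 3 =
      (yt : ℚ) ^ 2 * ((p : ℚ) ^ 3 - 5 * (A : ℚ) * (p : ℚ) ^ 2 * q + 4 * A * B * p * q ^ 2) := by
    have hx' : (p : ℚ) = x * q := by rw [hxpq]; field_simp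
    have hy' : (ys : ℚ) = y * yt := by rw [hypq]; field_simp
    rw [hx', hy']
    linear_combination ((yt : ℚ) ^ 2 * (q : ℚ) ^ 3) * hE
  have hZ : ys ^ 2 * q ^ 3 =
      yt ^ 2 * (p ^ 3 - 5 * (A : ℤ) * p ^ 2 * q + 4 * (A : ℤ) * (B : ℤ) * p * q ^ 2) := by
    exact_mod_cast hQ
  have hcpq : IsCoprime p q := by
    rw [Int.isCoprime_iff_gcd_eq_one]
    simpa [Int.gcd, hpdef, hqdef] using x.reduced
  have hcyy : IsCoprime yt ys := by
    rw [Int.isCoprime_iff_gcd_eq_one]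
    have h0 : Nat.Coprime y.den y.num.natAbs := (y.reduced).symm
    simpa [Int.gcd, hysdef, hytdef] using h0
  set P : ℤ := p ^ 3 - 5 * (A : ℤ) * p ^ 2 * q + 4 * (A : ℤ) * (B : ℤ) * p * q ^ 2 with hPdef
  have hqP : IsCoprime q P := by
    have h1 : IsCoprime q (p ^ 3) := hcpq.symm.pow_right
    have h2 : P = p ^ 3 + q * (-(5 * (A : ℤ)) * p ^ 2 + 4 * (A : ℤ) * (B : ℤ) * p * q) := by
      rw [hPdef]; ring
    rw [h2]
    exact h1.add_mul_left_right _
  have hq3yt2 : q ^ 3 ∣ yt ^ 2 := by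
    have h1 : q ^ 3 ∣ yt ^ 2 * P := ⟨ys ^ 2, by linear_combination -hZ⟩
    exact (IsCoprime.pow_left hqP).dvd_of_dvd_mul_right h1
  have hyt2q3 : yt ^ 2 ∣ q ^ 3 := by
    have h1 : yt ^ 2 ∣ ys ^ 2 * q ^ 3 := ⟨P, hZ⟩
    exact (IsCoprime.pow hcyy).dvd_of_dvd_mul_left h1
  have hyq : yt ^ 2 = q ^ 3 := Int.dvd_antisymm (by positivity) (by positivity) hyt2q3 hq3yt2
  have hys2 : ys ^ 2 = P := by
    have h1 := hZ
    rw [hyq] at h1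
    exact mul_right_cancel₀ (pow_ne_zero 3 hq0.ne') (by linear_combination h1)
  have hytq2 : yt ∣ q ^ 2 := by
    refine (Int.pow_dvd_pow_iff two_ne_zero).mp ?_
    have : yt ^ 2 ∣ q ^ 4 := hyq ▸ ⟨q, by ring⟩
    have h44 : (q ^ 2) ^ 2 = q ^ 4 := by ring
    rw [h44]
    exact this
  obtain ⟨w, hw⟩ := hytq2
  have hq_w : q = w ^ 2 := by
    have h1 : yt ^ 2 * q = yt ^ 2 * w ^ 2 := by
      calc yt ^ 2 * q = q ^ 3 * q := by rw [hyq]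
        _ = (q ^ 2) ^ 2 := by ring
        _ = (yt * w) ^ 2 := by rw [hw]
        _ = yt ^ 2 * w ^ 2 := by ring
    exact mul_left_cancel₀ (pow_ne_zero 2 hyt0.ne') h1
  have hw0 : 0 < w := by
    have h2 : 0 < yt * w := hw ▸ (by positivity : (0 : ℤ) < q ^ 2)
    nlinarith
  have hcppw : IsCoprime p w :=
    IsCoprime.of_isCoprime_of_dvd_right hcpq ⟨w, by rw [hq_w]; ring⟩
  have hr : ys ^ 2 = p * (p ^ 2 - 5 * (A : ℤ) * p * w ^ 2 + 4 * (A : ℤ) * (B : ℤ) * w ^ 4) := by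
    rw [hys2, hPdef, hq_w]; ring
  have hN0 : p ^ 2 - 5 * (A : ℤ) * p * w ^ 2 + 4 * (A : ℤ) * (B : ℤ) * w ^ 4 ≠ 0 := by
    intro hN
    have hABm : 25 * (A : ℤ) - 16 * (B : ℤ) = 9 * (m : ℤ) := by
      rw [hAdef, hBdef]; push_cast; ring
    have hkey : (2 * p - 5 * (A : ℤ) * w ^ 2) ^ 2 = (3 * w ^ 2) ^ 2 * ((A : ℤ) * m) := by
      linear_combination 4 * hN + (A : ℤ) * w ^ 4 * hABm
    obtain ⟨u, hu⟩ := (Int.pow_dvd_pow_iff two_ne_zero).mp ⟨(A : ℤ) * m, hkey⟩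
    have hAm : (A : ℤ) * m = u ^ 2 := by
      have h9 : (3 * w ^ 2 : ℤ) ^ 2 * ((A : ℤ) * m) = (3 * w ^ 2 : ℤ) ^ 2 * u ^ 2 := by
        rw [← hkey, hu]; ring
      exact mul_left_cancel₀ (by positivity) h9
    have hAmn : A * m = u.natAbs ^ 2 := by
      have h2 : ((A * m : ℕ) : ℤ) = ((u.natAbs ^ 2 : ℕ) : ℤ) := by
        rw [Nat.cast_mul, Nat.cast_pow, Int.natAbs_sq]
        exact hAm
      exact_mod_cast h2
    have hAdvd : A ∣ u.natAbs := hm2.dvd_of_dvd_pow ⟨m, hAmn.symm⟩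
    obtain ⟨v, hv⟩ := hAdvd
    have hmv : m = A * v ^ 2 := by
      have h2 : A * m = A * (A * v ^ 2) := by rw [hAmn, hv]; ring
      exact mul_left_cancel₀ hm2.pos.ne' h2
    have hle : A ≤ m := Nat.le_of_dvd hm ⟨v ^ 2, hmv⟩
    have hlt : m < A := by rw [hAdef]; exact Nat.lt_add_of_pos_right (by positivity)
    omega
  have hA8 : A % 8 = 3 := by omega
  have hB8 : B % 8 = 3 := by omega
  have hABne : A ≠ B := by
    intro h
    rw [hAdef, hBdef] at h
    have h2 : 16 * n ^ 2 = 25 * n ^ 2 := Nat.add_left_cancel h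
    have hn2 : 0 < n ^ 2 := by positivity
    nlinarith
  obtain ⟨d, hdcases, a, hpa⟩ := descent A B hm2 hm3 hABne hA8 hB8 p w ys hp0 hw0 hcppw hr hN0
  refine ⟨(d : ℚ), ?_, (a : ℚ) / (w : ℚ), ?_⟩
  · simp only [Set.mem_insert_iff, Set.mem_singleton_iff]
    rcases hdcases with rfl | rfl | rfl | rfl
    · left; norm_num
    · right; left; exact hAq
    · right; right; left; exact hBq
    · right; right; right
      rw [← hAq, ← hBq]; push_cast; ring
  · have hq' : (q : ℚ) = (w : ℚ) ^ 2 := by exact_mod_cast congrArg (fun z : ℤ => (z : ℚ)) hq_w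
    have hp' : (p : ℚ) = (d : ℚ) * (a : ℚ) ^ 2 := by
      exact_mod_cast congrArg (fun z : ℤ => (z : ℚ)) hpa
    have hwq : (w : ℚ) ≠ 0 := by exact_mod_cast hw0.ne'
    rw [hxpq, hq', hp']
    field_simp
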